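/- Let G be a finite group (or a finite subset F of a discrete group G with n = |F|), A a von Neumann algebra, β : G → Aut(A) an action implemented by unitaries u(g). Then the map ψ_F : A ⊗ M_n → B (where B is the von Neumann algebra generated by A and the u(g)) defined on matrix units by ψ_F(y ⊗ e_{f,h}) = |F|^{-1} β_f(y) u(f h^{-1}), for f, h ∈ F, is unital and completely positive. -/

import Mathlib

/-!
For the row `v = (u f)_{f ∈ F}` one has `ψ_F(Y) = |F|⁻¹ v Y v*`, and for `Y = a* d` this is
`|F|⁻¹ (a v*)* (d v*)`. Hence `ψ_F` applied entrywise to `b* b` equals `|F|⁻¹ ∑_g R_g* R_g`,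
where `(R_g)_{kj} = (b_{kj} v*)_g`: a positive element of the C⋆-algebra of matrices over
`B(K)`, so of the form `c* c`.
-/

/-- Complete positivity (for a not-necessarily-linear map we ask positivity of all matrix
amplifications) over matrices indexed by arbitrary finite types. -/
def IsCompletelyPositiveFun {A B : Type*} [Ring A] [StarRing A] [Ring B] [StarRing B]
    (φ : A → B) : Prop :=
  ∀ (ι : Type) (_ : Fintype ι) (_ : DecidableEq ι) (x : Matrix ι ι A),
    (∃ b : Matrix ι ι A, x = star b * b) → ∃ c : Matrix ι ι B, x.map φ = star c * c

/-- The map `ψ_F : B(K) ⊗ M_F → B(K)`, `ψ_F(Y) = |F|⁻¹ ∑_{f,h ∈ F} u(f) Y_{f,h} u(h)*`,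
which on matrix units is `ψ_F(y ⊗ e_{f,h}) = |F|⁻¹ β_f(y) u(f h⁻¹)` where
`β_g = Ad u(g)`. -/
noncomputable def psiF {G : Type*} [Group G] [DecidableEq G] {K : Type*}
    [NormedAddCommGroup K] [InnerProductSpace ℂ K] [CompleteSpace K]
    (u : G → (K →L[ℂ] K)) (F : Finset G)
    (Y : Matrix F F (K →L[ℂ] K)) : K →L[ℂ] K :=
  ((F.card : ℂ))⁻¹ • ∑ f : F, ∑ h : F, u f * Y f h * star (u h)

open Matrix
open scoped ComplexOrder

theorem Matrix.exists_eq_star_mul_self_of_nonneg {A : Type*} [CStarAlgebra A] [PartialOrder A]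
    [StarOrderedRing A] {ι : Type*} [Fintype ι] [DecidableEq ι] (M : Matrix ι ι A)
    (hM : 0 ≤ CStarMatrix.ofMatrix M) : ∃ d : Matrix ι ι A, M = star d * d := by
  -- the entrywise `ℝ`-module structure is not reducibly the one the C⋆-algebra API expects
  let : Module ℝ (CStarMatrix ι ι A) := Module.complexToReal _
  obtain ⟨d, hd⟩ := CStarAlgebra.nonneg_iff_eq_star_mul_self.mp hM
  exact ⟨CStarMatrix.ofMatrix.symm d, hd⟩

section Compression

variable {B : Type*} [NonUnitalSemiring B] [StarRing B] {n : Type*} [Fintype n]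

theorem Matrix.dotProduct_conjTranspose_mul_mulVec_star {m : Type*} [Fintype m] (v : n → B)
    (a d : Matrix m n B) :
    v ⬝ᵥ (aᴴ * d) *ᵥ star v = star (a *ᵥ star v) ⬝ᵥ d *ᵥ star v := by
  rw [← mulVec_mulVec, dotProduct_mulVec, star_mulVec, star_star]

theorem Matrix.map_conjTranspose_mul_self_dotProduct_mulVec_star {ι κ : Type*} [Fintype κ]
    (v : n → B) (b : Matrix κ ι (Matrix n n B)) :
    (bᴴ * b).map (fun Y => v ⬝ᵥ Y *ᵥ star v)
      = ∑ g, (b.map fun a => (a *ᵥ star v) g)ᴴ * b.map fun a => (a *ᵥ star v) g := by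
  ext i j
  simp only [map_apply, mul_apply, conjTranspose_apply, star_eq_conjTranspose, sum_mulVec,
    dotProduct_sum, dotProduct_conjTranspose_mul_mulVec_star, Matrix.sum_apply]
  rw [Finset.sum_comm]
  rfl

end Compression

section PsiF

variable {G : Type*} [Group G] [DecidableEq G] {K : Type*}
  [NormedAddCommGroup K] [InnerProductSpace ℂ K] [CompleteSpace K]
  (u : G → (K →L[ℂ] K)) (F : Finset G)

theorem psiF_eq_smul_dotProduct (Y : Matrix F F (K →L[ℂ] K)) :
    psiF u F Y = ((F.card : ℂ))⁻¹ • ((fun f : F => u f) ⬝ᵥ Y *ᵥ star fun f : F => u f) := by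
  simp only [psiF, dotProduct, mulVec, Finset.mul_sum, mul_assoc]
  rfl

theorem isLinearMap_psiF : IsLinearMap ℂ (psiF u F) where
  map_add Y Z := by
    simp [psiF, Matrix.add_apply, mul_add, add_mul, Finset.sum_add_distrib, smul_add]
  map_smul c Y := by
    simp only [psiF, Matrix.smul_apply, smul_mul_assoc, mul_smul_comm, ← Finset.smul_sum]
    rw [smul_comm]

theorem psiF_single (y : K →L[ℂ] K) (f h : F) :
    psiF u F (Matrix.single f h y) = ((F.card : ℂ))⁻¹ • (u f * y * star (u h)) := by
  simp [psiF, Matrix.single_apply, ite_and]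

theorem psiF_one (hF : F.Nonempty) (hu : ∀ f ∈ F, u f * star (u f) = 1) :
    psiF u F 1 = 1 := by
  have hn : (F.card : ℂ) ≠ 0 := Nat.cast_ne_zero.2 hF.card_pos.ne'
  have hsum : (fun f : F => u f) ⬝ᵥ star (fun f : F => u f) = (F.card : ℂ) • 1 := by
    simp [dotProduct, hu, Nat.cast_smul_eq_nsmul]
  rw [psiF_eq_smul_dotProduct, one_mulVec, hsum, smul_smul, inv_mul_cancel₀ hn, one_smul]

theorem isCompletelyPositiveFun_psiF : IsCompletelyPositiveFun (psiF u F) := by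
  rintro ι _ _ x ⟨b, rfl⟩
  set v : F → K →L[ℂ] K := fun f => u f
  set R : F → Matrix ι ι (K →L[ℂ] K) := fun g => b.map fun a => (a *ᵥ star v) g
  have hx : (star b * b).map (psiF u F) = ((F.card : ℂ))⁻¹ • ∑ g, star (R g) * R g := by
    simp only [star_eq_conjTranspose, R, ← map_conjTranspose_mul_self_dotProduct_mulVec_star]
    ext i j
    simp [psiF_eq_smul_dotProduct, v]
  refine exists_eq_star_mul_self_of_nonneg _ ?_
  rw [hx]
  show 0 ≤ ((F.card : ℂ))⁻¹ •
    ∑ g, star (CStarMatrix.ofMatrix (R g)) * CStarMatrix.ofMatrix (R g)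
  exact smul_nonneg (by positivity) (Finset.sum_nonneg fun g _ => star_mul_self_nonneg _)

end PsiF

/-- If `u : G → U(K)` is a unitary representation implementing the action `β_g = Ad u(g)`
and `F ⊆ G` is finite and nonempty, then the map
`ψ_F : M_F(B(K)) → B(K)` given on matrix units by `ψ_F(y ⊗ e_{f,h}) = |F|⁻¹ β_f(y) u(f h⁻¹)`
is linear, unital, and completely positive. -/
theorem psiF_is_unital_completely_positive
    {G : Type*} [Group G] [DecidableEq G] {K : Type*}
    [NormedAddCommGroup K] [InnerProductSpace ℂ K] [CompleteSpace K]
    (u : G → (K →L[ℂ] K))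
    (humul : ∀ g h : G, u (g * h) = u g * u h)
    (hustar : ∀ g : G, star (u g) = u g⁻¹)
    (huunit : ∀ g : G, u g * star (u g) = 1 ∧ star (u g) * u g = 1)
    (F : Finset G) (hF : F.Nonempty) :
    IsLinearMap ℂ (psiF u F) ∧
    psiF u F 1 = 1 ∧
    IsCompletelyPositiveFun (psiF u F) ∧
    (∀ (y : K →L[ℂ] K) (f h : F),
      psiF u F (Matrix.single f h y)
        = ((F.card : ℂ))⁻¹ • (u f * y * star (u f) * u ((f : G) * (h : G)⁻¹))) := by
  refine ⟨isLinearMap_psiF u F, psiF_one u F hF fun f _ => (huunit f).1,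
    isCompletelyPositiveFun_psiF u F, fun y f h => ?_⟩
  rw [psiF_single, humul, ← hustar, ← mul_assoc, mul_assoc (u f * y), (huunit f).2, mul_one]
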